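/- arXiv:1609.09356 — 2 statements merged into one kernel-verified Lean document; each statement's English description precedes it below -/
import Mathlib

section
/- Let p be an odd prime and χ the quadratic character of F_p. Then Σ χ(ab+1)χ(ac+1), summed over all ordered triples (a,b,c) of distinct nonzero elements of F_p, equals -p^2 + 6p - 13 if p ≡ 1 (mod 4), and -p^2 + 6p - 9 if p ≡ 3 (mod 4). -/
/-!
Write `q = #F`. For fixed `a ≠ 0` put `f b = χ (a * b + 1)` and `B = Fˣ \ {a}`. The inner sum
over distinct `b, c ∈ B` is `(∑_B f)² - ∑_B f²`, and since `b ↦ a * b + 1` is a bijection,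
`∑_{b ≠ 0} f = -1` and `∑_{b ≠ 0} f² = q - 2`; so the inner sum is
`3 - q + 2 χ(a² + 1) + 2 χ(a² + 1)²`. Summing over `a` leaves `∑_a χ(a² + 1) = -1`, which counting
square roots turns into the Jacobi sum `J(χ, χ) = -χ(-1)`, and `∑_a χ(a² + 1)² = q - 1 - χ(-1)`,
the number of `a` with `a² ≠ -1`.
-/

open Finset

theorem sum_sum_ite_ne_mul {ι R : Type*} [DecidableEq ι] [CommRing R] (s : Finset ι) (f : ι → R) :
    ∑ i ∈ s, ∑ j ∈ s, (if i ≠ j then f i * f j else 0) =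
      (∑ i ∈ s, f i) ^ 2 - ∑ i ∈ s, f i ^ 2 := by
  rw [sq, sum_mul_sum, ← sum_sub_distrib]
  refine sum_congr rfl fun i hi => ?_
  simp only [ite_not, sum_ite, sum_const_zero, zero_add, filter_ne, sum_erase_eq_sub hi]
  ring

theorem sum_ite_distinct_ne_eq_sum_erase {α M : Type*} [Fintype α] [DecidableEq α]
    [AddCommMonoid M] (z : α) (g : α → α → α → M) :
    (∑ a, ∑ b, ∑ c, if a ≠ z ∧ b ≠ z ∧ c ≠ z ∧ a ≠ b ∧ a ≠ c ∧ b ≠ c then g a b c else 0) =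
      ∑ a ∈ univ.erase z, ∑ b ∈ (univ.erase z).erase a, ∑ c ∈ (univ.erase z).erase a,
        if b ≠ c then g a b c else 0 := by
  simp only [← filter_ne', filter_filter, sum_filter]
  refine Fintype.sum_congr _ _ fun a => ?_
  split_ifs with ha
  · refine Fintype.sum_congr _ _ fun b => ?_
    split_ifs with hb
    · refine Fintype.sum_congr _ _ fun c => ?_
      split_ifs <;> simp_all [eq_comm]
    · exact sum_eq_zero fun c _ => if_neg (by tauto)
  · exact sum_eq_zero fun b _ => sum_eq_zero fun c _ => if_neg (by tauto)

theorem sum_comp_mul_add_one {F M : Type*} [Field F] [Fintype F] [AddCommMonoid M] (g : F → M)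
    {a : F} (ha : a ≠ 0) : ∑ b, g (a * b + 1) = ∑ x, g x :=
  ((Equiv.mulLeft₀ a ha).trans (Equiv.addRight 1)).sum_comp g

section QuadraticChar

variable {F : Type*} [Field F] [Fintype F] [DecidableEq F]

local notation "χ" => quadraticChar F

theorem quadraticChar_sq_eq_ite (x : F) : χ x ^ 2 = if x = 0 then 0 else 1 := by
  split_ifs with hx
  · simp [hx]
  · exact quadraticChar_sq_one hx

theorem sum_quadraticChar_sq : ∑ x : F, χ x ^ 2 = Fintype.card F - 1 := by
  simp_rw [quadraticChar_sq_eq_ite]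
  simp [sum_ite, filter_ne', Nat.cast_sub Fintype.card_pos]

theorem sum_erase_zero_quadraticChar_mul_add_one (hF : ringChar F ≠ 2) {a : F} (ha : a ≠ 0) :
    ∑ b ∈ univ.erase 0, χ (a * b + 1) = -1 := by
  rw [sum_erase_eq_sub (mem_univ 0), sum_comp_mul_add_one _ ha, quadraticChar_sum_zero hF]
  simp

theorem sum_erase_zero_quadraticChar_mul_add_one_sq {a : F} (ha : a ≠ 0) :
    ∑ b ∈ univ.erase 0, χ (a * b + 1) ^ 2 = Fintype.card F - 2 := by
  rw [sum_erase_eq_sub (mem_univ 0), sum_comp_mul_add_one (fun x => χ x ^ 2) ha,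
    sum_quadraticChar_sq]
  simp only [mul_zero, zero_add, map_one, one_pow]
  ring

theorem sum_sum_distinct_quadraticChar_mul_add_one (hF : ringChar F ≠ 2) {a : F} (ha : a ≠ 0) :
    ∑ b ∈ (univ.erase 0).erase a, ∑ c ∈ (univ.erase 0).erase a,
      (if b ≠ c then χ (a * b + 1) * χ (a * c + 1) else 0) =
      3 - Fintype.card F + 2 * χ (a ^ 2 + 1) + 2 * χ (a ^ 2 + 1) ^ 2 := by
  have ha' : a ∈ univ.erase 0 := mem_erase.mpr ⟨ha, mem_univ a⟩
  rw [sum_sum_ite_ne_mul, sum_erase_eq_sub ha', sum_erase_eq_sub ha',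
    sum_erase_zero_quadraticChar_mul_add_one hF ha,
    sum_erase_zero_quadraticChar_mul_add_one_sq ha, sq a]
  ring

theorem sum_comp_sq (hF : ringChar F ≠ 2) {M : Type*} [AddCommGroup M] (g : F → M) :
    ∑ a, g (a ^ 2) = ∑ t, (χ t + 1) • g t := by
  rw [← sum_fiberwise univ (· ^ 2)]
  refine sum_congr rfl fun t _ => ?_
  rw [← quadraticChar_card_sqrts hF t, Set.toFinset_ofPred, natCast_zsmul, ← sum_const]
  exact sum_congr rfl fun a ha => by rw [(mem_filter.mp ha).2]

theorem sum_quadraticChar_mul_quadraticChar_add_one (hF : ringChar F ≠ 2) :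
    ∑ t : F, χ t * χ (t + 1) = -1 := by
  have hJ := jacobiSum_nontrivial_inv (quadraticChar_ne_one hF)
  rw [(quadraticChar_isQuadratic F).inv, jacobiSum] at hJ
  calc ∑ t : F, χ t * χ (t + 1) = ∑ x : F, χ (-x) * χ (-x + 1) :=
        (Equiv.sum_comp (Equiv.neg F) _).symm
    _ = χ (-1) * ∑ x : F, χ x * χ (1 - x) := by
      rw [mul_sum]
      refine sum_congr rfl fun x _ => ?_
      rw [neg_eq_neg_one_mul x, map_mul, neg_one_mul, neg_add_eq_sub, mul_assoc]
    _ = -1 := by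
      rw [hJ, mul_neg, ← map_mul, neg_one_mul, neg_neg, map_one]

theorem sum_quadraticChar_sq_add_one (hF : ringChar F ≠ 2) :
    ∑ a : F, χ (a ^ 2 + 1) = -1 := by
  rw [sum_comp_sq hF (fun t => χ (t + 1))]
  simp only [smul_eq_mul, add_mul, one_mul, sum_add_distrib,
    sum_quadraticChar_mul_quadraticChar_add_one hF]
  rw [show ∑ t : F, χ (t + 1) = ∑ t, χ t from Equiv.sum_comp (Equiv.addRight 1) _,
    quadraticChar_sum_zero hF, add_zero]

theorem sum_quadraticChar_sq_add_one_sq (hF : ringChar F ≠ 2) :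
    ∑ a : F, χ (a ^ 2 + 1) ^ 2 = Fintype.card F - 1 - χ (-1) := by
  rw [sum_comp_sq hF (fun t => χ (t + 1) ^ 2)]
  have h : ∀ t : F, (χ t + 1) • χ (t + 1) ^ 2 = (χ t + 1) - if t = -1 then χ t + 1 else 0 := by
    intro t
    rw [quadraticChar_sq_eq_ite, smul_eq_mul]
    by_cases ht : t = -1
    · simp [ht]
    · simp [ht, add_eq_zero_iff_eq_neg]
  simp only [h, sum_sub_distrib, sum_add_distrib, sum_ite_eq', mem_univ, if_true,
    quadraticChar_sum_zero hF, sum_const, card_univ, nsmul_eq_mul, mul_one]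
  ring

theorem sum_distinct_nonzero_quadraticChar_mul_add_one (hF : ringChar F ≠ 2) :
    (∑ a : F, ∑ b : F, ∑ c : F,
      if a ≠ 0 ∧ b ≠ 0 ∧ c ≠ 0 ∧ a ≠ b ∧ a ≠ c ∧ b ≠ c then χ (a * b + 1) * χ (a * c + 1)
      else 0) = -(Fintype.card F : ℤ) ^ 2 + 6 * Fintype.card F - 11 - 2 * χ (-1) := by
  rw [sum_ite_distinct_ne_eq_sum_erase, sum_congr rfl fun a ha =>
    sum_sum_distinct_quadraticChar_mul_add_one hF (ne_of_mem_erase ha),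
    sum_add_distrib, sum_add_distrib, sum_const, ← mul_sum, ← mul_sum,
    sum_erase_eq_sub (mem_univ 0), sum_erase_eq_sub (mem_univ 0), sum_quadraticChar_sq_add_one hF,
    sum_quadraticChar_sq_add_one_sq hF, card_erase_of_mem (mem_univ 0), card_univ, nsmul_eq_mul,
    Nat.cast_sub (Fintype.card_pos (α := F))]
  simp only [ne_eq, OfNat.ofNat_ne_zero, not_false_eq_true, zero_pow, zero_add, map_one, one_pow,
    Nat.cast_one]
  ring

end QuadraticChar

theorem S3_sum (p : ℕ) [Fact p.Prime] (hodd : p % 2 = 1) :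
    (∑ a : ZMod p, ∑ b : ZMod p, ∑ c : ZMod p,
      if a ≠ 0 ∧ b ≠ 0 ∧ c ≠ 0 ∧ a ≠ b ∧ a ≠ c ∧ b ≠ c then
        quadraticChar (ZMod p) (a * b + 1) * quadraticChar (ZMod p) (a * c + 1)
      else 0) =
      if p % 4 = 1 then -(p : ℤ) ^ 2 + 6 * p - 13 else -(p : ℤ) ^ 2 + 6 * p - 9 := by
  have hF : ringChar (ZMod p) ≠ 2 := by rw [ZMod.ringChar_zmod_n]; omega
  rw [sum_distinct_nonzero_quadraticChar_mul_add_one hF, quadraticChar_neg_one hF, ZMod.card,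
    ZMod.χ₄_nat_eq_if_mod_four, if_neg (by omega)]
  split_ifs <;> ring
end

section
/- For every m ≥ 2, N^(m)(p) = p^m / (2^{m(m-1)/2} · m!) + o(p^m) as p → ∞ over primes. More precisely, 2^{m(m-1)/2} · m! · N^(m)(p) - p^m = O(p^{m-1/2}). -/
/-- The number of Diophantine `m`-tuples in `F_p`. -/
noncomputable def numDiophTuples (p m : ℕ) : ℕ :=
  {s : Finset (ZMod p) | s.card = m ∧ (0 : ZMod p) ∉ s ∧
    ∀ a ∈ s, ∀ b ∈ s, a ≠ b → IsSquare (a * b + 1)}.ncard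

/-!
Let `χ` be the quadratic character of `F_q`, `q` odd. For `a ∈ F_q^m` with distinct nonzero
entries and no `a_i a_j = -1`, the weight `∏_{i<j} (1 + χ(a_i a_j + 1))` is `2^(m choose 2)` if
`a` is an ordered Diophantine tuple and `0` otherwise; the remaining `a` number `O(m² q^(m-1))`.
Expanding the product over edge sets `E` of the complete graph, `E = ∅` contributes `q^m`.
For `E ≠ ∅` fix every coordinate except the two endpoints of an edge of `E`: what is left is a
bilinear sum `∑_{x,y} f(x) g(y) χ(xy + 1)` with `|f|, |g| ≤ 1`, which Cauchy–Schwarz bounds by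
`2 q^(3/2)` because `∑_x χ(xy + 1) χ(xy' + 1)` is, for `y ≠ y'`, a Jacobi sum of modulus `≤ 1`.
-/

open Finset Function

lemma MulChar.IsQuadratic.abs_apply_le_one {R : Type*} [CommMonoid R] {χ : MulChar R ℝ}
    (hχ : χ.IsQuadratic) (x : R) : |χ x| ≤ 1 := by
  rcases hχ x with h | h | h <;> simp [h]

lemma MulChar.IsQuadratic.abs_prod_apply_le_one {R α : Type*} [CommMonoid R] {χ : MulChar R ℝ}
    (hχ : χ.IsQuadratic) (s : Finset α) (u : α → R) : |∏ e ∈ s, χ (u e)| ≤ 1 := by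
  rw [abs_prod]
  exact prod_le_one (fun _ _ => abs_nonneg _) fun e _ => hχ.abs_apply_le_one _

section CharacterSums

variable {F : Type*} [Field F] [Fintype F]

lemma Fintype.sum_comp_mul_add {M : Type*} [AddCommMonoid M] (f : F → M) {b : F} (hb : b ≠ 0)
    (c : F) : ∑ x, f (x * b + c) = ∑ x, f x :=
  Fintype.sum_equiv ((Equiv.mulRight₀ b hb).trans (Equiv.addRight c)) _ _ fun _ => rfl

variable {χ : MulChar F ℝ}

lemma MulChar.sum_apply_mul_add_eq_zero (hχ : χ ≠ 1) {b : F} (hb : b ≠ 0) (c : F) :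
    ∑ x, χ (x * b + c) = 0 := by
  rw [Fintype.sum_comp_mul_add (fun x => χ x) hb, MulChar.sum_eq_zero_of_ne_one hχ]

/-- The substitution `x = (t (y' - y) - y') / (y y')` turns the sum into a Jacobi sum. -/
lemma MulChar.IsQuadratic.abs_sum_apply_mul_add_one_mul_le_one (hχ : χ.IsQuadratic)
    (hχ1 : χ ≠ 1) {y y' : F} (hyy' : y ≠ y') :
    |∑ x, χ (x * y + 1) * χ (x * y' + 1)| ≤ 1 := by
  rcases eq_or_ne y 0 with rfl | hy
  · simp [MulChar.sum_apply_mul_add_eq_zero hχ1 hyy'.symm]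
  rcases eq_or_ne y' 0 with rfl | hy'
  · simp [MulChar.sum_apply_mul_add_eq_zero hχ1 hyy']
  have hα : (y' - y) / (y * y') ≠ 0 := by
    have := sub_ne_zero.mpr hyy'.symm
    positivity
  have hsubst : ∀ t, χ ((t * ((y' - y) / (y * y')) + -y⁻¹) * y + 1) *
      χ ((t * ((y' - y) / (y * y')) + -y⁻¹) * y' + 1) =
      χ ((y' - y) / y' * ((y - y') / y)) * (χ t * χ (1 - t)) := by
    intro t
    simp only [← map_mul]
    congr 1
    field_simp
    ring
  rw [← Fintype.sum_comp_mul_add (fun x => χ (x * y + 1) * χ (x * y' + 1)) hα (-y⁻¹)]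
  simp only [hsubst, ← Finset.mul_sum]
  have hjac : ∑ t, χ t * χ (1 - t) = -χ (-1) := by
    simpa [jacobiSum, hχ.inv] using jacobiSum_nontrivial_inv hχ1
  rw [hjac, abs_mul, abs_neg]
  exact mul_le_one₀ (hχ.abs_apply_le_one _) (abs_nonneg _) (hχ.abs_apply_le_one _)

lemma MulChar.IsQuadratic.abs_sum_apply_mul_add_one_mul_le [DecidableEq F]
    (hχ : χ.IsQuadratic) (hχ1 : χ ≠ 1) (y y' : F) :
    |∑ x, χ (x * y + 1) * χ (x * y' + 1)| ≤ 1 + if y = y' then (Fintype.card F : ℝ) else 0 := by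
  split_ifs with h
  · calc |∑ x, χ (x * y + 1) * χ (x * y' + 1)| ≤ ∑ _x : F, (1 : ℝ) := by
          refine (abs_sum_le_sum_abs _ _).trans (sum_le_sum fun x _ => ?_)
          rw [abs_mul]
          exact mul_le_one₀ (hχ.abs_apply_le_one _) (abs_nonneg _) (hχ.abs_apply_le_one _)
      _ ≤ 1 + Fintype.card F := by simp
  · simpa using hχ.abs_sum_apply_mul_add_one_mul_le_one hχ1 h

lemma MulChar.IsQuadratic.sum_sq_sum_mul_apply_mul_add_one_le (hχ : χ.IsQuadratic)
    (hχ1 : χ ≠ 1) (g : F → ℝ) (hg : ∀ y, |g y| ≤ 1) :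
    ∑ x, (∑ y, g y * χ (x * y + 1)) ^ 2 ≤ 2 * (Fintype.card F : ℝ) ^ 2 := by
  classical
  have hexpand : ∑ x, (∑ y, g y * χ (x * y + 1)) ^ 2 =
      ∑ y, ∑ y', g y * g y' * ∑ x, χ (x * y + 1) * χ (x * y' + 1) := by
    simp_rw [sq, sum_mul_sum, mul_sum]
    rw [sum_comm]
    refine sum_congr rfl fun y _ => ?_
    rw [sum_comm]
    exact sum_congr rfl fun y' _ => sum_congr rfl fun x _ => by ring
  rw [hexpand]
  calc ∑ y, ∑ y', g y * g y' * ∑ x, χ (x * y + 1) * χ (x * y' + 1)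
      ≤ ∑ y : F, ∑ y' : F, (1 + if y = y' then (Fintype.card F : ℝ) else 0) := by
        refine sum_le_sum fun y _ => sum_le_sum fun y' _ => (le_abs_self _).trans ?_
        rw [abs_mul, abs_mul]
        refine (mul_le_of_le_one_left (abs_nonneg _) ?_).trans
          (hχ.abs_sum_apply_mul_add_one_mul_le hχ1 y y')
        exact mul_le_one₀ (hg y) (abs_nonneg _) (hg y')
    _ = 2 * (Fintype.card F : ℝ) ^ 2 := by
        simp only [sum_add_distrib, sum_ite_eq, mem_univ, if_true, sum_const, card_univ,
          nsmul_eq_mul]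
        ring

lemma MulChar.IsQuadratic.abs_sum_sum_mul_apply_mul_add_one_le (hχ : χ.IsQuadratic)
    (hχ1 : χ ≠ 1) (f g : F → ℝ) (hf : ∀ x, |f x| ≤ 1) (hg : ∀ y, |g y| ≤ 1) :
    |∑ x, ∑ y, f x * g y * χ (x * y + 1)| ≤
      2 * Fintype.card F * √(Fintype.card F) := by
  set q : ℝ := (Fintype.card F : ℝ)
  have hrows : ∑ x, ∑ y, f x * g y * χ (x * y + 1) = ∑ x, f x * ∑ y, g y * χ (x * y + 1) := by
    simp only [mul_sum, mul_assoc]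
  have hf2 : ∑ x, f x ^ 2 ≤ q := by
    calc ∑ x, f x ^ 2 ≤ ∑ _x : F, (1 : ℝ) :=
          sum_le_sum fun x _ => by rw [← sq_abs]; exact pow_le_one₀ (abs_nonneg _) (hf x)
      _ = q := by simp [q]
  refine abs_le_of_sq_le_sq ?_ (by positivity)
  calc (∑ x, ∑ y, f x * g y * χ (x * y + 1)) ^ 2
      ≤ (∑ x, f x ^ 2) * ∑ x, (∑ y, g y * χ (x * y + 1)) ^ 2 := by
        rw [hrows]; exact sum_mul_sq_le_sq_mul_sq _ _ _
    _ ≤ q * (2 * q ^ 2) := mul_le_mul hf2 (hχ.sum_sq_sum_mul_apply_mul_add_one_le hχ1 g hg)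
        (sum_nonneg fun _ _ => sq_nonneg _) (by positivity)
    _ ≤ (2 * q * √q) ^ 2 := by
        rw [mul_pow, mul_pow, Real.sq_sqrt (by positivity)]
        nlinarith [pow_nonneg (show (0 : ℝ) ≤ q by positivity) 3]

end CharacterSums

section UpdateSums

variable {ι F : Type*} [Fintype ι] [DecidableEq ι] [Fintype F]

/-- `(a, x) ↦ (update a i x, a i)` is an involution of `(ι → F) × F`. -/
lemma Fintype.sum_sum_update {M : Type*} [AddCommMonoid M] (Φ : (ι → F) → M) (i : ι) :
    ∑ a, ∑ x, Φ (update a i x) = Fintype.card F • ∑ a, Φ a := by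
  have hinv : Involutive fun z : (ι → F) × F => (update z.1 i z.2, z.1 i) := by
    rintro ⟨a, x⟩
    simp
  have := Fintype.sum_equiv hinv.toPerm (fun z => Φ (update z.1 i z.2)) (fun z => Φ z.1)
    fun _ => rfl
  simp only [Fintype.sum_prod_type, sum_const, card_univ] at this
  rw [this, smul_sum]

lemma sq_card_mul_abs_sum_le_of_update_update (Φ : (ι → F) → ℝ) (i j : ι) {B : ℝ}
    (h : ∀ a, |∑ x, ∑ y, Φ (update (update a i x) j y)| ≤ B) :
    (Fintype.card F : ℝ) ^ 2 * |∑ a, Φ a| ≤ Fintype.card F ^ Fintype.card ι * B := by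
  have hsum : (Fintype.card F : ℝ) ^ 2 * ∑ a, Φ a =
      ∑ a, ∑ x, ∑ y, Φ (update (update a i x) j y) := by
    rw [Fintype.sum_sum_update (fun b => ∑ y, Φ (update b j y)), Fintype.sum_sum_update,
      nsmul_eq_mul, nsmul_eq_mul, sq, mul_assoc]
  calc (Fintype.card F : ℝ) ^ 2 * |∑ a, Φ a|
      = |∑ a, ∑ x, ∑ y, Φ (update (update a i x) j y)| := by
        rw [← hsum, abs_mul, abs_sq]
    _ ≤ ∑ _a : ι → F, B := (abs_sum_le_sum_abs _ _).trans (sum_le_sum fun a _ => h a)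
    _ = Fintype.card F ^ Fintype.card ι * B := by simp

lemma card_mul_card_le_card_pow_of_eqOn_compl (S : Finset (ι → F)) (i : ι)
    (hS : ∀ a ∈ S, ∀ b ∈ S, Set.EqOn a b {i}ᶜ → a i = b i) :
    #S * Fintype.card F ≤ Fintype.card F ^ Fintype.card ι := by
  have hinj : Set.InjOn (fun z : (ι → F) × F => update z.1 i z.2)
      ((S ×ˢ univ : Finset ((ι → F) × F)) : Set ((ι → F) × F)) := by
    rintro ⟨a, x⟩ ha ⟨b, y⟩ hb hab
    simp only [coe_product, coe_univ, Set.mem_prod, mem_coe, Set.mem_univ, and_true] at ha hb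
    have hxy : x = y := by simpa using congr_fun hab i
    have hoff : Set.EqOn a b {i}ᶜ := fun k (hk : k ≠ i) => by simpa [hk] using congr_fun hab k
    refine Prod.ext (funext fun k => ?_) hxy
    by_cases hk : k = i
    · exact hk ▸ hS a ha b hb hoff
    · exact hoff hk
  simpa using card_le_card_of_injOn _ (fun _ _ => mem_univ _) hinj

variable [DecidableEq F]

lemma card_filter_apply_eq_mul_le (i : ι) (c : F) :
    #{a : ι → F | a i = c} * Fintype.card F ≤ Fintype.card F ^ Fintype.card ι :=
  card_mul_card_le_card_pow_of_eqOn_compl _ i fun a ha b hb _ => by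
    rw [(mem_filter.mp ha).2, (mem_filter.mp hb).2]

lemma card_filter_apply_eq_apply_mul_le {i j : ι} (hij : i ≠ j) :
    #{a : ι → F | a i = a j} * Fintype.card F ≤ Fintype.card F ^ Fintype.card ι :=
  card_mul_card_le_card_pow_of_eqOn_compl _ i fun a ha b hb hab => by
    rw [(mem_filter.mp ha).2, (mem_filter.mp hb).2, hab hij.symm]

end UpdateSums

lemma card_biUnion_mul_le {β γ : Type*} [DecidableEq γ] (T : Finset β) (S : β → Finset γ)
    {c N : ℕ} (h : ∀ t ∈ T, #(S t) * c ≤ N) : #(T.biUnion S) * c ≤ #T * N :=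
  calc #(T.biUnion S) * c ≤ (∑ t ∈ T, #(S t)) * c := Nat.mul_le_mul_right _ card_biUnion_le
    _ = ∑ t ∈ T, #(S t) * c := sum_mul _ _ _
    _ ≤ #T * N := sum_le_card_nsmul _ _ _ h

section EdgeSums

variable {ι F : Type*} [Field F]

def pairProd (a : ι → F) : Sym2 ι → F :=
  Sym2.lift ⟨fun i j => a i * a j, fun _ _ => mul_comm _ _⟩

@[simp]
lemma pairProd_mk (a : ι → F) (i j : ι) : pairProd a s(i, j) = a i * a j := rfl

lemma pairProd_congr {a b : ι → F} {e : Sym2 ι} (h : ∀ k ∈ e, a k = b k) :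
    pairProd a e = pairProd b e := by
  induction e using Sym2.ind with
  | h i j => simp [h i (Sym2.mem_mk_left i j), h j (Sym2.mem_mk_right i j)]

variable [DecidableEq ι] {χ : MulChar F ℝ}

lemma prod_apply_pairProd_update_update (E : Finset (Sym2 ι)) {i j : ι} (hij : i ≠ j)
    (hE : s(i, j) ∈ E) (a : ι → F) (x y : F) :
    ∏ e ∈ E, χ (pairProd (update (update a i x) j y) e + 1) =
      (∏ e ∈ (E.erase s(i, j)).filter (j ∉ ·), χ (pairProd (update a i x) e + 1)) *
      (∏ e ∈ (E.erase s(i, j)).filter (j ∈ ·), χ (pairProd (update a j y) e + 1)) *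
      χ (x * y + 1) := by
  rw [← mul_prod_erase E _ hE, ← prod_filter_not_mul_prod_filter (E.erase s(i, j)) (j ∈ ·),
    mul_comm]
  simp only [pairProd_mk, update_self, update_of_ne hij]
  congr 2
  · refine prod_congr rfl fun e he => congr_arg _ (congr_arg (· + 1) (pairProd_congr ?_))
    intro k hk
    exact update_of_ne (ne_of_mem_of_not_mem hk (mem_filter.mp he).2) _ _
  · refine prod_congr rfl fun e he => congr_arg _ (congr_arg (· + 1) (pairProd_congr ?_))
    obtain ⟨hne, -⟩ := mem_erase.mp (mem_filter.mp he).1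
    have hi : i ∉ e := fun hi => hne ((Sym2.mem_and_mem_iff hij).mp ⟨hi, (mem_filter.mp he).2⟩)
    intro k hk
    rw [update_comm hij, update_of_ne (ne_of_mem_of_not_mem hk hi)]

variable [Fintype ι] [Fintype F]

lemma MulChar.IsQuadratic.abs_sum_prod_apply_pairProd_add_one_le (hχ : χ.IsQuadratic)
    (hχ1 : χ ≠ 1) {E : Finset (Sym2 ι)} (hE : ∀ e ∈ E, ¬e.IsDiag) (hEne : E.Nonempty) :
    |∑ a : ι → F, ∏ e ∈ E, χ (pairProd a e + 1)| ≤
      2 * (Fintype.card F : ℝ) ^ Fintype.card ι / √(Fintype.card F) := by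
  obtain ⟨e₀, he₀⟩ := hEne
  induction e₀ using Sym2.ind with | h i j => ?_
  have hij : i ≠ j := by simpa using hE _ he₀
  set q : ℝ := (Fintype.card F : ℝ)
  have hq : 0 < q := by simp [q, Fintype.card_pos]
  have hbound := sq_card_mul_abs_sum_le_of_update_update
    (fun a => ∏ e ∈ E, χ (pairProd a e + 1)) i j (B := 2 * q * √q) fun a => by
    simp only [prod_apply_pairProd_update_update E hij he₀ a]
    exact hχ.abs_sum_sum_mul_apply_mul_add_one_le hχ1 _ _ (fun _ => hχ.abs_prod_apply_le_one _ _)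
      fun _ => hχ.abs_prod_apply_le_one _ _
  set S := ∑ a : ι → F, ∏ e ∈ E, χ (pairProd a e + 1)
  have hsq : √q * √q = q := Real.mul_self_sqrt hq.le
  have hsqrt : 0 < √q := Real.sqrt_pos.mpr hq
  rw [le_div_iff₀ hsqrt]
  refine le_of_mul_le_mul_left ?_ (show 0 < q * √q by positivity)
  calc q * √q * (|S| * √q) = q ^ 2 * |S| := by linear_combination q * |S| * hsq
    _ ≤ q ^ Fintype.card ι * (2 * q * √q) := hbound
    _ = q * √q * (2 * q ^ Fintype.card ι) := by ring

end EdgeSums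

section Counting

variable {ι α : Type*} [Fintype ι] [DecidableEq α]

lemma injective_of_card_image_univ {a : ι → α} (h : #(image a univ) = Fintype.card ι) :
    Injective a := by
  rw [← Set.injOn_univ, ← coe_univ]
  exact card_image_iff.mp (by rw [h, card_univ])

variable [DecidableEq ι] [Fintype α]

lemma card_filter_image_univ_eq (s : Finset α) (hs : #s = Fintype.card ι) :
    #{a : ι → α | image a univ = s} = (Fintype.card ι).factorial := by
  have hcard : Fintype.card ι = Fintype.card s := by simp [hs]
  rw [← Fintype.card_equiv (Fintype.equivOfCardEq hcard), ← card_univ (α := ι ≃ s)]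
  refine card_bij' (fun a ha => Equiv.ofBijective (fun i => ⟨a i, ?_⟩) ?_)
    (fun e _ => fun i => (e i : α)) (fun _ _ => mem_univ _) ?_ ?_ ?_
  · rw [← (mem_filter.mp ha).2]
    exact mem_image_of_mem a (mem_univ i)
  · refine (Fintype.bijective_iff_injective_and_card _).mpr ⟨fun i j hij => ?_, hcard⟩
    refine injective_of_card_image_univ ?_ (congr_arg Subtype.val hij)
    rw [(mem_filter.mp ha).2, hs]
  · intro e _
    simp only [mem_filter, mem_univ, true_and]
    ext x
    simp only [mem_image, mem_univ, true_and]
    exact ⟨fun ⟨i, hi⟩ => hi ▸ (e i).2, fun hx => ⟨e.symm ⟨x, hx⟩, by simp⟩⟩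
  · intro a ha
    rfl
  · intro e _
    ext i
    rfl

lemma card_filter_injective_and_image (P : Finset α → Prop) [DecidablePred P] :
    #{a : ι → α | Injective a ∧ P (image a univ)} =
      (Fintype.card ι).factorial * #{s : Finset α | #s = Fintype.card ι ∧ P s} := by
  have hmaps : ∀ a ∈ ({a : ι → α | Injective a ∧ P (image a univ)} : Finset _),
      image a univ ∈ ({s : Finset α | #s = Fintype.card ι ∧ P s} : Finset _) := by
    intro a ha
    obtain ⟨hinj, hP⟩ := (mem_filter.mp ha).2
    simpa [card_image_of_injective _ hinj] using hP
  rw [card_eq_sum_card_fiberwise hmaps, mul_comm, ← smul_eq_mul, ← sum_const]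
  refine sum_congr rfl fun s hs => ?_
  obtain ⟨hs, hPs⟩ := (mem_filter.mp hs).2
  rw [← card_filter_image_univ_eq s hs, filter_filter]
  congr 1
  ext a
  simp only [mem_filter, mem_univ, true_and]
  exact ⟨fun h => h.2, fun h => ⟨⟨injective_of_card_image_univ (h ▸ hs), h ▸ hPs⟩, h⟩⟩

end Counting

section DiophantineSets

variable {R : Type*} [Semiring R]

def IsDiophantineSet (s : Finset R) : Prop :=
  (0 : R) ∉ s ∧ ∀ x ∈ s, ∀ y ∈ s, x ≠ y → IsSquare (x * y + 1)

instance [Fintype R] [DecidableEq R] : DecidablePred (IsDiophantineSet (R := R)) :=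
  fun _ => inferInstanceAs (Decidable (_ ∧ _))

lemma isDiophantineSet_image_iff {ι : Type*} [Fintype ι] [DecidableEq R] {a : ι → R} :
    IsDiophantineSet (image a univ) ↔
      (∀ i, a i ≠ 0) ∧ ∀ i j, a i ≠ a j → IsSquare (a i * a j + 1) := by
  simp [IsDiophantineSet, eq_comm]

end DiophantineSets

section DiophantineTuples

variable {ι F : Type*} [Field F] [Fintype F] [DecidableEq F]

variable (F) in
noncomputable def quadraticCharReal : MulChar F ℝ :=
  (quadraticChar F).ringHomComp (Int.castRingHom ℝ)

lemma quadraticCharReal_ne_one (hF : ringChar F ≠ 2) : quadraticCharReal F ≠ 1 :=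
  (MulChar.ringHomComp_ne_one_iff (Int.cast_injective (α := ℝ))).mpr (quadraticChar_ne_one hF)

lemma isQuadratic_quadraticCharReal : (quadraticCharReal F).IsQuadratic :=
  (quadraticChar_isQuadratic F).comp _

lemma quadraticCharReal_add_one_eq_two {x : F} (hx : x ≠ 0) (hsq : IsSquare x) :
    quadraticCharReal F x + 1 = 2 := by
  norm_num [quadraticCharReal, (quadraticChar_one_iff_isSquare hx).mpr hsq]

lemma quadraticCharReal_add_one_eq_zero {x : F} (hsq : ¬IsSquare x) :
    quadraticCharReal F x + 1 = 0 := by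
  simp [quadraticCharReal, quadraticChar_neg_one_iff_not_isSquare.mpr hsq]

variable [Fintype ι] [DecidableEq ι]

lemma card_filter_mul_add_one_eq_zero_mul_le {i j : ι} (hij : i ≠ j) :
    #{a : ι → F | a i * a j + 1 = 0} * Fintype.card F ≤ Fintype.card F ^ Fintype.card ι := by
  refine card_mul_card_le_card_pow_of_eqOn_compl _ i fun a ha b hb hab => ?_
  have ha' : a i * a j + 1 = 0 := (mem_filter.mp ha).2
  have hb' : b i * a j + 1 = 0 := hab hij.symm ▸ (mem_filter.mp hb).2
  have hj : a j ≠ 0 := fun h => by simp [h] at ha'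
  exact mul_right_cancel₀ hj (add_right_cancel (ha'.trans hb'.symm))

def IsGeneric (a : ι → F) : Prop :=
  (∀ i, a i ≠ 0) ∧ ∀ i j, i ≠ j → a i ≠ a j ∧ a i * a j + 1 ≠ 0

instance : DecidablePred (IsGeneric (ι := ι) (F := F)) :=
  fun _ => inferInstanceAs (Decidable (_ ∧ _))

noncomputable def squareWeight (a : ι → F) : ℝ :=
  ∏ e ∈ (⊤ : SimpleGraph ι).edgeFinset, (quadraticCharReal F (pairProd a e + 1) + 1)

lemma squareWeight_nonneg (a : ι → F) : 0 ≤ squareWeight a :=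
  prod_nonneg fun e _ => by
    linarith [abs_le.mp (isQuadratic_quadraticCharReal.abs_apply_le_one (pairProd a e + 1))]

lemma squareWeight_le (a : ι → F) : squareWeight a ≤ 2 ^ (Fintype.card ι).choose 2 := by
  rw [← SimpleGraph.card_edgeFinset_top_eq_card_choose_two, ← prod_const]
  refine prod_le_prod (fun e _ => ?_) fun e _ => ?_ <;>
    linarith [abs_le.mp (isQuadratic_quadraticCharReal.abs_apply_le_one (pairProd a e + 1))]

lemma squareWeight_of_isGeneric {a : ι → F} (ha : IsGeneric a) :
    squareWeight a = if Injective a ∧ IsDiophantineSet (image a univ) then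
      2 ^ (Fintype.card ι).choose 2 else 0 := by
  obtain ⟨ha0, hpair⟩ := ha
  have hinj : Injective a := fun i j hij => by_contra fun h => (hpair i j h).1 hij
  rw [squareWeight]
  split_ifs with hD <;> rw [isDiophantineSet_image_iff] at hD
  · rw [← SimpleGraph.card_edgeFinset_top_eq_card_choose_two, ← prod_const]
    refine prod_congr rfl fun e he => ?_
    induction e using Sym2.ind with | h i j => ?_
    have hij : i ≠ j := by simpa using he
    exact quadraticCharReal_add_one_eq_two (hpair i j hij).2 (hD.2.2 i j (hpair i j hij).1)
  · obtain ⟨i, j, hij, hsq⟩ : ∃ i j, a i ≠ a j ∧ ¬IsSquare (a i * a j + 1) := by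
      simpa [hinj, ha0] using hD
    refine prod_eq_zero (i := s(i, j)) ?_ (quadraticCharReal_add_one_eq_zero hsq)
    simpa using hinj.ne_iff.mp hij

lemma sum_squareWeight_eq :
    ∑ a : ι → F, squareWeight a = ∑ E ∈ (⊤ : SimpleGraph ι).edgeFinset.powerset,
      ∑ a : ι → F, ∏ e ∈ E, quadraticCharReal F (pairProd a e + 1) := by
  simp only [squareWeight, prod_add, prod_const_one, mul_one]
  exact sum_comm

lemma abs_sum_squareWeight_sub_le (hF : ringChar F ≠ 2) :
    |∑ a : ι → F, squareWeight a - (Fintype.card F : ℝ) ^ Fintype.card ι| ≤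
      2 ^ (Fintype.card ι).choose 2 *
        (2 * (Fintype.card F : ℝ) ^ Fintype.card ι / √(Fintype.card F)) := by
  set K := (⊤ : SimpleGraph ι).edgeFinset
  have hterm : ∀ E ∈ K.powerset.erase ∅,
      |∑ a : ι → F, ∏ e ∈ E, quadraticCharReal F (pairProd a e + 1)| ≤
        2 * (Fintype.card F : ℝ) ^ Fintype.card ι / √(Fintype.card F) := by
    intro E hE
    obtain ⟨hEne, hEK⟩ := mem_erase.mp hE
    refine isQuadratic_quadraticCharReal.abs_sum_prod_apply_pairProd_add_one_le
      (quadraticCharReal_ne_one hF) (fun e he => ?_) (nonempty_iff_ne_empty.mpr hEne)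
    simpa [K] using mem_powerset.mp hEK he
  have hcard : (#(K.powerset.erase ∅) : ℝ) ≤ 2 ^ (Fintype.card ι).choose 2 := by
    rw [← SimpleGraph.card_edgeFinset_top_eq_card_choose_two]
    exact_mod_cast card_erase_le.trans (card_powerset K).le
  rw [sum_squareWeight_eq, ← add_sum_erase _ _ (empty_mem_powerset K)]
  simp only [prod_empty, sum_const, card_univ, Fintype.card_fun, nsmul_eq_mul, mul_one,
    Nat.cast_pow, add_sub_cancel_left]
  refine (abs_sum_le_sum_abs _ _).trans ((sum_le_card_nsmul _ _ _ hterm).trans ?_)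
  rw [nsmul_eq_mul]
  exact mul_le_mul_of_nonneg_right hcard (by positivity)

lemma card_filter_not_isGeneric_mul_le :
    #{a : ι → F | ¬IsGeneric a} * Fintype.card F ≤
      (Fintype.card ι + 2 * Fintype.card ι ^ 2) * Fintype.card F ^ Fintype.card ι := by
  set n := Fintype.card ι
  set N := Fintype.card F ^ n
  set D := (univ : Finset ι).offDiag
  have hsub : ({a | ¬IsGeneric a} : Finset (ι → F)) ⊆
      univ.biUnion (fun i => {a | a i = 0}) ∪ (D.biUnion (fun ij => {a | a ij.1 = a ij.2}) ∪
        D.biUnion (fun ij => {a | a ij.1 * a ij.2 + 1 = 0})) := by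
    intro a ha
    simp only [IsGeneric, mem_filter, mem_univ, true_and, not_and_or, not_forall, not_not,
      exists_prop] at ha
    simp only [D, mem_union, mem_biUnion, mem_filter, mem_univ, true_and, mem_offDiag,
      Prod.exists]
    rcases ha with ⟨i, hi⟩ | ⟨i, j, hij, h | h⟩
    exacts [.inl ⟨i, hi⟩, .inr (.inl ⟨i, j, hij, h⟩), .inr (.inr ⟨i, j, hij, h⟩)]
  have hD : #D ≤ n ^ 2 := by
    rw [offDiag_card, card_univ, sq]
    exact Nat.sub_le _ _
  have hne : ∀ ij ∈ D, ij.1 ≠ ij.2 := fun ij hij => (mem_offDiag.mp hij).2.2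
  calc #{a : ι → F | ¬IsGeneric a} * Fintype.card F
      ≤ (#(univ.biUnion fun i => {a : ι → F | a i = 0}) +
          (#(D.biUnion fun ij => {a : ι → F | a ij.1 = a ij.2}) +
            #(D.biUnion fun ij => {a : ι → F | a ij.1 * a ij.2 + 1 = 0}))) * Fintype.card F :=
        Nat.mul_le_mul_right _ ((card_le_card hsub).trans
          ((card_union_le _ _).trans (Nat.add_le_add_left (card_union_le _ _) _)))
    _ ≤ n * N + (n ^ 2 * N + n ^ 2 * N) := by
        simp only [add_mul]
        refine add_le_add (card_biUnion_mul_le _ _ fun i _ => card_filter_apply_eq_mul_le i 0)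
          (add_le_add ?_ ?_)
        · exact (card_biUnion_mul_le _ _ fun ij hij =>
            card_filter_apply_eq_apply_mul_le (hne ij hij)).trans (Nat.mul_le_mul_right _ hD)
        · exact (card_biUnion_mul_le _ _ fun ij hij =>
            card_filter_mul_add_one_eq_zero_mul_le (hne ij hij)).trans
              (Nat.mul_le_mul_right _ hD)
    _ = (n + 2 * n ^ 2) * N := by ring

lemma abs_two_pow_mul_card_sub_sum_squareWeight_le :
    |2 ^ (Fintype.card ι).choose 2 *
        (#{a : ι → F | Injective a ∧ IsDiophantineSet (image a univ)} : ℝ) -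
        ∑ a : ι → F, squareWeight a| ≤
      2 ^ (Fintype.card ι).choose 2 * #{a : ι → F | ¬IsGeneric a} := by
  set K : ℝ := 2 ^ (Fintype.card ι).choose 2
  have hcount : K * #{a : ι → F | Injective a ∧ IsDiophantineSet (image a univ)} =
      ∑ a : ι → F, if Injective a ∧ IsDiophantineSet (image a univ) then K else 0 := by
    rw [← sum_filter, sum_const, nsmul_eq_mul, mul_comm]
  rw [hcount, ← sum_sub_distrib,
    ← sum_filter_of_ne (p := fun a => ¬IsGeneric a) fun a _ h => ?_, mul_comm]
  · refine (abs_sum_le_sum_abs _ _).trans ((sum_le_card_nsmul _ _ _ fun a _ => ?_).trans_eq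
      (nsmul_eq_mul _ _))
    refine abs_sub_le_of_nonneg_of_le (by split_ifs <;> positivity) (by split_ifs <;> simp [K])
      (squareWeight_nonneg a) (squareWeight_le a)
  · exact fun hgen => h (by rw [squareWeight_of_isGeneric hgen, sub_self])

theorem abs_two_pow_mul_card_sub_pow_le (hF : ringChar F ≠ 2) :
    |2 ^ (Fintype.card ι).choose 2 *
        (#{a : ι → F | Injective a ∧ IsDiophantineSet (image a univ)} : ℝ) -
        (Fintype.card F : ℝ) ^ Fintype.card ι| ≤
      2 ^ (Fintype.card ι).choose 2 * (Fintype.card ι + 2 * Fintype.card ι ^ 2 + 2) *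
        (Fintype.card F : ℝ) ^ Fintype.card ι / √(Fintype.card F) := by
  have hbad : (#{a : ι → F | ¬IsGeneric a} : ℝ) * Fintype.card F ≤
      (Fintype.card ι + 2 * Fintype.card ι ^ 2) * (Fintype.card F : ℝ) ^ Fintype.card ι := by
    exact_mod_cast card_filter_not_isGeneric_mul_le
  set q : ℝ := (Fintype.card F : ℝ)
  set K : ℝ := 2 ^ (Fintype.card ι).choose 2
  have hq : 1 ≤ q := Nat.one_le_cast.mpr Fintype.card_pos
  have hsqrt : 0 < √q := by positivity
  replace hbad : (#{a : ι → F | ¬IsGeneric a} : ℝ) ≤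
      (Fintype.card ι + 2 * Fintype.card ι ^ 2) * q ^ Fintype.card ι / √q := by
    rw [le_div_iff₀ hsqrt]
    refine le_trans (mul_le_mul_of_nonneg_left ?_ (by positivity)) hbad
    exact Real.sqrt_le_self_iff.mpr (.inr hq)
  calc _ ≤ |K * #{a : ι → F | Injective a ∧ IsDiophantineSet (image a univ)} -
          ∑ a : ι → F, squareWeight a| + |∑ a : ι → F, squareWeight a - q ^ Fintype.card ι| :=
        abs_sub_le _ _ _
    _ ≤ K * ((Fintype.card ι + 2 * Fintype.card ι ^ 2) * q ^ Fintype.card ι / √q) +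
          K * (2 * q ^ Fintype.card ι / √q) :=
        add_le_add (abs_two_pow_mul_card_sub_sum_squareWeight_le.trans
          (mul_le_mul_of_nonneg_left hbad (by positivity))) (abs_sum_squareWeight_sub_le hF)
    _ = _ := by ring

end DiophantineTuples

section ZMod

variable {p : ℕ} [NeZero p]

lemma numDiophTuples_eq_card (m : ℕ) :
    numDiophTuples p m = #{s : Finset (ZMod p) | #s = m ∧ IsDiophantineSet s} := by
  rw [numDiophTuples, Set.ncard_eq_toFinset_card']
  congr 1
  ext s
  simp only [Set.mem_toFinset, mem_filter, mem_univ, true_and]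
  rfl

lemma card_filter_isDiophantineSet_image_eq (m : ℕ) :
    #{a : Fin m → ZMod p | Injective a ∧ IsDiophantineSet (image a univ)} =
      m.factorial * numDiophTuples p m := by
  rw [card_filter_injective_and_image, Fintype.card_fin, numDiophTuples_eq_card]

lemma numDiophTuples_two {m : ℕ} (hm : 2 ≤ m) : numDiophTuples 2 m = 0 := by
  rw [numDiophTuples_eq_card, card_eq_zero, filter_eq_empty_iff]
  rintro s - ⟨hs, h0, -⟩
  have : #s ≤ #(univ.erase (0 : ZMod 2)) :=
    card_le_card fun x hx => mem_erase.mpr ⟨fun h => h0 (h ▸ hx), mem_univ x⟩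
  simp at this
  omega

end ZMod

/-- `2^{m(m-1)/2} · m! · N^{(m)}(p) - p^m = O(p^{m-1/2})` as `p → ∞` over primes;
in particular `N^{(m)}(p) = p^m/(2^{m(m-1)/2} m!) + o(p^m)`. -/
theorem asymptotic_count (m : ℕ) (hm : 2 ≤ m) :
    ∃ C : ℝ, 0 < C ∧ ∀ p : ℕ, p.Prime →
      |(2 ^ (m * (m - 1) / 2) * m.factorial * numDiophTuples p m : ℝ) - (p : ℝ) ^ m| ≤
        C * (p : ℝ) ^ m / Real.sqrt p := by
  refine ⟨2 ^ (m * (m - 1) / 2) * (m + 2 * m ^ 2 + 2), by positivity, fun p hp => ?_⟩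
  have : Fact p.Prime := ⟨hp⟩
  rcases eq_or_ne p 2 with rfl | hp2
  · have hC : √2 ≤ (2 : ℝ) ^ (m * (m - 1) / 2) * (m + 2 * m ^ 2 + 2) := by
      have h2 : √2 ≤ 2 := (Real.sqrt_le_left zero_le_two).mpr (by norm_num)
      nlinarith [one_le_pow₀ (M₀ := ℝ) one_le_two (n := m * (m - 1) / 2)]
    rw [numDiophTuples_two hm, le_div_iff₀ (by positivity)]
    push_cast
    simpa [abs_of_pos, mul_comm] using
      mul_le_mul_of_nonneg_left hC (by positivity : (0 : ℝ) ≤ 2 ^ m)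
  · have h := abs_two_pow_mul_card_sub_pow_le (ι := Fin m) (F := ZMod p)
        (by rwa [ZMod.ringChar_zmod_n])
    rw [card_filter_isDiophantineSet_image_eq, Fintype.card_fin, ZMod.card,
      Nat.choose_two_right] at h
    push_cast at h ⊢
    rwa [mul_assoc _ (m.factorial : ℝ)]
end
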